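/- Let κ, ν, τ > 0 and fix w_s ∈ [0, 1]. Define M(t) = √(κ² + 2κw_s/τ + t²/τ²) and Ĵ(t) = −w_s/τ + log(I_ν(M(t))/M(t)^ν) − log(I_ν(κ)/κ^ν). Then Ĵ is strictly increasing on (0, 1]. -/

import Mathlib

/-!
Dividing out `m ^ ν` turns the Bessel series into `(1/2) ^ ν · Σₖ cₖ ((m/2)²)ᵏ`, a power series
in `(m/2)²` with positive coefficients `cₖ = 1 / (k! Γ(ν + k + 1))`; it is therefore positive and
strictly increasing in `m > 0`. Since `M(t)` is strictly increasing in `t ≥ 0` and `log` is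
strictly increasing, so is `Ĵ`.
-/

/-- The modified Bessel function of the first kind of order `ν`. -/
noncomputable def besselI (ν m : ℝ) : ℝ :=
  ∑' k : ℕ, (1 / ((Nat.factorial k : ℝ) * Real.Gamma (ν + k + 1))) *
    (m / 2) ^ (2 * (k : ℝ) + ν)

/-- `M(t) = √(κ² + 2κw_s/τ + t²/τ²)`. -/
noncomputable def Mt (κ τ ws t : ℝ) : ℝ :=
  Real.sqrt (κ ^ 2 + 2 * κ * ws / τ + t ^ 2 / τ ^ 2)

/-- `Ĵ(t) = −w_s/τ + log(I_ν(M(t))/M(t)^ν) − log(I_ν(κ)/κ^ν)`. -/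
noncomputable def JhatT (κ ν τ ws t : ℝ) : ℝ :=
  -ws / τ + Real.log (besselI ν (Mt κ τ ws t) / (Mt κ τ ws t) ^ ν) -
    Real.log (besselI ν κ / κ ^ ν)

noncomputable def besselCoeff (ν : ℝ) (k : ℕ) : ℝ :=
  1 / ((Nat.factorial k : ℝ) * Real.Gamma (ν + k + 1))

lemma besselCoeff_pos {ν : ℝ} (hν : -1 < ν) (k : ℕ) : 0 < besselCoeff ν k := by
  have : 0 < Real.Gamma (ν + k + 1) :=
    Real.Gamma_pos_of_pos (by linarith [(k.cast_nonneg : (0 : ℝ) ≤ k)])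
  unfold besselCoeff
  positivity

lemma Gamma_add_one_le_Gamma_add_natCast_add_one {ν : ℝ} (hν : 0 ≤ ν) (k : ℕ) :
    Real.Gamma (ν + 1) ≤ Real.Gamma (ν + k + 1) := by
  induction k with
  | zero => simp
  | succ n ih =>
    have hGamma : Real.Gamma (ν + (n + 1 : ℕ) + 1) = (ν + n + 1) * Real.Gamma (ν + n + 1) := by
      rw [← Real.Gamma_add_one (by positivity)]
      push_cast
      ring_nf
    have : 0 < Real.Gamma (ν + n + 1) := Real.Gamma_pos_of_pos (by positivity)
    rw [hGamma]
    nlinarith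

lemma besselCoeff_le {ν : ℝ} (hν : 0 ≤ ν) (k : ℕ) :
    besselCoeff ν k ≤ 1 / Real.Gamma (ν + 1) / Nat.factorial k := by
  have : 0 < Real.Gamma (ν + 1) := Real.Gamma_pos_of_pos (by positivity)
  rw [div_div, besselCoeff, mul_comm (Real.Gamma _)]
  gcongr
  exact Gamma_add_one_le_Gamma_add_natCast_add_one hν k

lemma summable_besselCoeff_mul_pow {ν : ℝ} (hν : 0 ≤ ν) (x : ℝ) :
    Summable (fun k : ℕ => besselCoeff ν k * x ^ k) := by
  refine .of_norm_bounded ((Real.summable_pow_div_factorial |x|).mul_left (1 / Real.Gamma (ν + 1)))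
    fun k => ?_
  calc ‖besselCoeff ν k * x ^ k‖ = besselCoeff ν k * |x| ^ k := by
        rw [norm_mul, norm_pow, Real.norm_eq_abs, Real.norm_eq_abs,
          abs_of_pos (besselCoeff_pos (by linarith) k)]
    _ ≤ 1 / Real.Gamma (ν + 1) / Nat.factorial k * |x| ^ k := by
        gcongr
        exact besselCoeff_le hν k
    _ = 1 / Real.Gamma (ν + 1) * (|x| ^ k / Nat.factorial k) := by ring

noncomputable def besselSeries (ν x : ℝ) : ℝ :=
  ∑' k : ℕ, besselCoeff ν k * x ^ k

lemma besselI_div_rpow {ν m : ℝ} (hm : 0 < m) :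
    besselI ν m / m ^ ν = (1 / 2) ^ ν * besselSeries ν ((m / 2) ^ 2) := by
  have hterm (k : ℕ) : besselCoeff ν k * (m / 2) ^ (2 * (k : ℝ) + ν) =
      (m / 2) ^ ν * (besselCoeff ν k * ((m / 2) ^ 2) ^ k) := by
    rw [Real.rpow_add (by positivity), show 2 * (k : ℝ) = ((2 * k : ℕ) : ℝ) by push_cast; ring,
      Real.rpow_natCast, pow_mul]
    ring
  have hsplit : (m / 2) ^ ν = (1 / 2) ^ ν * m ^ ν := by
    rw [← Real.mul_rpow (by norm_num) hm.le, one_div_mul_eq_div]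
  have : 0 < m ^ ν := by positivity
  have hI : besselI ν m = ∑' k : ℕ, besselCoeff ν k * (m / 2) ^ (2 * (k : ℝ) + ν) := rfl
  rw [hI, besselSeries, tsum_congr hterm, tsum_mul_left, hsplit]
  field_simp

lemma besselSeries_pos {ν : ℝ} (hν : 0 ≤ ν) {x : ℝ} (hx : 0 ≤ x) :
    0 < besselSeries ν x :=
  (summable_besselCoeff_mul_pow hν x).tsum_pos
    (fun k => mul_nonneg (besselCoeff_pos (by linarith) k).le (pow_nonneg hx k)) 0
    (by simpa using besselCoeff_pos (by linarith) 0)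

lemma besselSeries_strictMonoOn {ν : ℝ} (hν : 0 ≤ ν) :
    StrictMonoOn (besselSeries ν) (Set.Ici 0) := by
  intro x hx y hy hxy
  exact (summable_besselCoeff_mul_pow hν x).tsum_lt_tsum (i := 1)
    (fun k => mul_le_mul_of_nonneg_left (pow_le_pow_left₀ hx hxy.le k)
      (besselCoeff_pos (by linarith) k).le)
    (by simpa using mul_lt_mul_of_pos_left hxy (besselCoeff_pos (by linarith) 1))
    (summable_besselCoeff_mul_pow hν y)

lemma besselI_div_rpow_pos {ν m : ℝ} (hν : 0 ≤ ν) (hm : 0 < m) : 0 < besselI ν m / m ^ ν := by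
  rw [besselI_div_rpow hm]
  have := besselSeries_pos hν (sq_nonneg (m / 2))
  positivity

lemma besselI_div_rpow_strictMonoOn {ν : ℝ} (hν : 0 ≤ ν) :
    StrictMonoOn (fun m => besselI ν m / m ^ ν) (Set.Ioi 0) := by
  intro a (ha : 0 < a) b (hb : 0 < b) hab
  simp only [besselI_div_rpow ha, besselI_div_rpow hb]
  have hsq : (a / 2) ^ 2 < (b / 2) ^ 2 := by gcongr
  exact mul_lt_mul_of_pos_left
    (besselSeries_strictMonoOn hν (sq_nonneg (a / 2)) (sq_nonneg (b / 2)) hsq) (by positivity)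

lemma Mt_strictMonoOn {κ τ ws : ℝ} (hκ : 0 ≤ κ) (hτ : 0 < τ) (hws : 0 ≤ ws) :
    StrictMonoOn (Mt κ τ ws) (Set.Ici 0) := by
  intro s (hs : 0 ≤ s) t _ hst
  have : 0 ≤ κ ^ 2 + 2 * κ * ws / τ := by positivity
  apply Real.sqrt_lt_sqrt (by positivity)
  gcongr

theorem JhatT_strictMono (κ ν τ ws : ℝ)
    (hκ : 0 < κ) (hν : 0 < ν) (hτ : 0 < τ) (hws : ws ∈ Set.Icc (0:ℝ) 1) :
    StrictMonoOn (JhatT κ ν τ ws) (Set.Ioc (0:ℝ) 1) := by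
  intro s hs t ht hst
  have hM := Mt_strictMonoOn hκ.le hτ hws.1
  have hMs : 0 < Mt κ τ ws s := (Real.sqrt_nonneg _).trans_lt (hM Set.self_mem_Ici hs.1.le hs.1)
  have hMst : Mt κ τ ws s < Mt κ τ ws t := hM hs.1.le ht.1.le hst
  have := Real.log_lt_log (besselI_div_rpow_pos hν.le hMs)
    (besselI_div_rpow_strictMonoOn hν.le hMs (hMs.trans hMst) hMst)
  unfold JhatT
  linarith
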